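/- I − II identity: with I and II defined as in the proof (I the Robinson quadratic combination, II := (1/2)∂_b(-N μ_q q^{ab}e^{-4γ}∂_a ω η λ - N μ_q q^{ab}e^{-2γ}∂_a γ (η²+λ²))), if the background equations ∂_b(N μ_q q^{ab}∂_a γ) + (1/2)N μ_q e^{-4γ}q^{ab}∂_a ω ∂_b ω + N μ_q Λ e^{-2γ} = 0 and ∂_b(N μ_q q^{ab}e^{-4γ}∂_a ω) = 0 hold, then I - II = -(1/2)(λ² + η²)Λ e^{-4γ} N μ_q + N μ_q q^{ab} e^{-4γ} ∂_a ω ∂_b η λ, as an identity of smooth functions on an open set U ⊆ ℝ². -/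

import Mathlib

open Real

/-- Spatial partial derivative in direction `i` on ℝ². -/
noncomputable def pd (i : Fin 2) (f : (Fin 2 → ℝ) → ℝ) (x : Fin 2 → ℝ) : ℝ :=
  fderiv ℝ f x (Pi.single i 1)

lemma pd_contDiff {f : (Fin 2 → ℝ) → ℝ} (hf : ContDiff ℝ (⊤ : ℕ∞) f) (i : Fin 2) :
    ContDiff ℝ (⊤ : ℕ∞) (pd i f) :=
  (hf.fderiv_right (by exact_mod_cast (le_top : (⊤ : ℕ∞) + 1 ≤ ⊤))).clm_apply contDiff_const

lemma pd_key {G H e l g : (Fin 2 → ℝ) → ℝ} {x : Fin 2 → ℝ}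
    (hG : DifferentiableAt ℝ G x) (hH : DifferentiableAt ℝ H x)
    (he : DifferentiableAt ℝ e x) (hl : DifferentiableAt ℝ l x)
    (hg : DifferentiableAt ℝ g x) (i : Fin 2) :
    pd i (fun y => -(G y * (e y * l y))
        - H y * (Real.exp (-2 * g y) * (e y * e y + l y * l y))) x
      = -(pd i G x * (e x * l x) + G x * (pd i e x * l x + e x * pd i l x))
        - (pd i H x * (Real.exp (-2 * g x) * (e x * e x + l x * l x))
           + H x * (Real.exp (-2 * g x) * (-2 * pd i g x) * (e x * e x + l x * l x)
              + Real.exp (-2 * g x) * (2 * e x * pd i e x + 2 * l x * pd i l x))) := by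
  have h1 := he.hasFDerivAt.mul hl.hasFDerivAt
  have h2 := hG.hasFDerivAt.mul h1
  have h3 : HasFDerivAt (fun y => Real.exp (-2 * g y))
      (Real.exp (-2 * g x) • ((-2:ℝ) • fderiv ℝ g x)) x :=
    (hg.hasFDerivAt.const_mul (-2)).exp
  have h4 := (he.hasFDerivAt.mul he.hasFDerivAt).add (hl.hasFDerivAt.mul hl.hasFDerivAt)
  have h5 := h3.mul h4
  have h6 := hH.hasFDerivAt.mul h5
  have h7 : HasFDerivAt (fun y => -(G y * (e y * l y))
      - H y * (Real.exp (-2 * g y) * (e y * e y + l y * l y))) _ x := h2.neg.sub h6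
  simp only [pd, h7.fderiv]
  simp only [ContinuousLinearMap.sub_apply, ContinuousLinearMap.neg_apply,
    ContinuousLinearMap.add_apply, ContinuousLinearMap.smul_apply, smul_eq_mul, Pi.mul_apply, Pi.add_apply]
  ring

/-- The I − II identity of the proof of the main theorem,
as an identity of smooth functions on an open set U ⊆ ℝ². -/
theorem I_minus_II_identity
    (U : Set (Fin 2 → ℝ)) (hU : IsOpen U)
    (lam eta gam om N muq : (Fin 2 → ℝ) → ℝ)
    (q : (Fin 2 → ℝ) → Fin 2 → Fin 2 → ℝ) (Lam : ℝ)
    (hqsym : ∀ x a b, q x a b = q x b a)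
    (hlam : ContDiff ℝ (⊤ : ℕ∞) lam) (heta : ContDiff ℝ (⊤ : ℕ∞) eta)
    (hgam : ContDiff ℝ (⊤ : ℕ∞) gam) (hom : ContDiff ℝ (⊤ : ℕ∞) om)
    (hN : ContDiff ℝ (⊤ : ℕ∞) N) (hmuq : ContDiff ℝ (⊤ : ℕ∞) muq)
    (hq : ∀ a b, ContDiff ℝ (⊤ : ℕ∞) (fun x => q x a b))
    (hNpos : ∀ x, 0 < N x) (hmupos : ∀ x, 0 < muq x)
    (hbgγ : ∀ x ∈ U,
      (∑ b, pd b (fun y => N y * muq y * ∑ a, q y a b * pd a gam y) x)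
        + (1 / 2) * N x * muq x * exp (-4 * gam x)
            * (∑ a, ∑ b, q x a b * pd a om x * pd b om x)
        + N x * muq x * Lam * exp (-2 * gam x) = 0)
    (hbgω : ∀ x ∈ U,
      (∑ b, pd b (fun y => N y * muq y * exp (-4 * gam y)
          * ∑ a, q y a b * pd a om y) x) = 0)
    (I II : (Fin 2 → ℝ) → ℝ)
    (hI : ∀ x, I x =
      (1 / 4) * N x * exp (-2 * gam x) * muq x
        * (∑ a, ∑ b, q x a b
            * ((pd a lam x - 2 * lam x * pd a gam x)
                  * (pd b lam x - 2 * lam x * pd b gam x)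
               + (pd a eta x - 2 * eta x * pd a gam x)
                  * (pd b eta x - 2 * eta x * pd b gam x)
               + (pd a eta x + lam x * exp (-2 * gam x) * pd a om x)
                  * (pd b eta x + lam x * exp (-2 * gam x) * pd b om x)
               + (pd a lam x - eta x * exp (-2 * gam x) * pd a om x)
                  * (pd b lam x - eta x * exp (-2 * gam x) * pd b om x)))
      - (1 / 2) * N x * exp (-2 * gam x) * muq x
          * (∑ a, ∑ b, q x a b * (pd a lam x * pd b lam x + pd a eta x * pd b eta x)))
    (hII : ∀ x, II x =
      (1 / 2) * ∑ b, pd b (fun y =>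
          -(N y * muq y * (∑ a, q y a b * exp (-4 * gam y) * pd a om y)
              * eta y * lam y)
          - N y * muq y * (∑ a, q y a b * exp (-2 * gam y) * pd a gam y)
              * (eta y ^ 2 + lam y ^ 2)) x) :
    ∀ x ∈ U, I x - II x =
      -(1 / 2) * (lam x ^ 2 + eta x ^ 2) * Lam * exp (-4 * gam x) * N x * muq x
        + N x * muq x * exp (-4 * gam x)
            * (∑ a, ∑ b, q x a b * pd a om x * pd b eta x) * lam x := by
  intro x hx
  have dd : ∀ {f : (Fin 2 → ℝ) → ℝ}, ContDiff ℝ (⊤ : ℕ∞) f → DifferentiableAt ℝ f x :=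
    fun hf => (hf.differentiable (by simp)).differentiableAt
  have hGc : ∀ b : Fin 2, ContDiff ℝ (⊤ : ℕ∞) (fun y =>
      N y * muq y * exp (-4 * gam y) * (q y 0 b * pd 0 om y + q y 1 b * pd 1 om y)) :=
    fun b => ((hN.mul hmuq).mul ((contDiff_const.mul hgam).exp)).mul
      (((hq 0 b).mul (pd_contDiff hom 0)).add ((hq 1 b).mul (pd_contDiff hom 1)))
  have hHc : ∀ b : Fin 2, ContDiff ℝ (⊤ : ℕ∞) (fun y =>
      N y * muq y * (q y 0 b * pd 0 gam y + q y 1 b * pd 1 gam y)) :=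
    fun b => (hN.mul hmuq).mul
      (((hq 0 b).mul (pd_contDiff hgam 0)).add ((hq 1 b).mul (pd_contDiff hgam 1)))
  have key : ∀ b : Fin 2, pd b (fun y =>
      -(N y * muq y * (q y 0 b * exp (-4 * gam y) * pd 0 om y
          + q y 1 b * exp (-4 * gam y) * pd 1 om y) * eta y * lam y)
      - N y * muq y * (q y 0 b * exp (-2 * gam y) * pd 0 gam y
          + q y 1 b * exp (-2 * gam y) * pd 1 gam y) * (eta y ^ 2 + lam y ^ 2)) x
    = -(pd b (fun y => N y * muq y * exp (-4 * gam y)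
            * (q y 0 b * pd 0 om y + q y 1 b * pd 1 om y)) x * (eta x * lam x)
        + (N x * muq x * exp (-4 * gam x)
            * (q x 0 b * pd 0 om x + q x 1 b * pd 1 om x))
          * (pd b eta x * lam x + eta x * pd b lam x))
      - (pd b (fun y => N y * muq y
            * (q y 0 b * pd 0 gam y + q y 1 b * pd 1 gam y)) x
          * (exp (-2 * gam x) * (eta x * eta x + lam x * lam x))
        + (N x * muq x * (q x 0 b * pd 0 gam x + q x 1 b * pd 1 gam x))
          * (exp (-2 * gam x) * (-2 * pd b gam x) * (eta x * eta x + lam x * lam x)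
             + exp (-2 * gam x) * (2 * eta x * pd b eta x + 2 * lam x * pd b lam x))) := by
    intro b
    rw [show (fun y =>
        -(N y * muq y * (q y 0 b * exp (-4 * gam y) * pd 0 om y
            + q y 1 b * exp (-4 * gam y) * pd 1 om y) * eta y * lam y)
        - N y * muq y * (q y 0 b * exp (-2 * gam y) * pd 0 gam y
            + q y 1 b * exp (-2 * gam y) * pd 1 gam y) * (eta y ^ 2 + lam y ^ 2))
      = (fun y =>
        -((N y * muq y * exp (-4 * gam y)
            * (q y 0 b * pd 0 om y + q y 1 b * pd 1 om y)) * (eta y * lam y))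
        - (N y * muq y * (q y 0 b * pd 0 gam y + q y 1 b * pd 1 gam y))
            * (exp (-2 * gam y) * (eta y * eta y + lam y * lam y)))
      from funext fun y => by ring]
    exact pd_key (dd (hGc b)) (dd (hHc b)) (dd heta) (dd hlam) (dd hgam) b
  have key0 := key 0
  have key1 := key 1
  have hbgω' := hbgω x hx
  have hbgγ' := hbgγ x hx
  simp only [Fin.sum_univ_two] at hbgω' hbgγ'
  rw [hI, hII]
  simp only [Fin.sum_univ_two]
  have h4 : exp (-4 * gam x) = exp (-2 * gam x) * exp (-2 * gam x) := by
    rw [← Real.exp_add]; congr 1; ring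
  rw [h4] at hbgγ' key0 key1 ⊢
  rw [hqsym x 1 0] at hbgγ' key0 ⊢
  linear_combination ((1:ℝ)/2 * eta x * lam x) * hbgω'
    + ((1:ℝ)/2 * exp (-2 * gam x) * (eta x ^ 2 + lam x ^ 2)) * hbgγ'
    + (-(1:ℝ)/2) * key0 + (-(1:ℝ)/2) * key1
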